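/- arXiv:math/0611880 — 2 statements merged into one kernel-verified Lean document; each statement's English description precedes it below -/
import Mathlib

section
/- With θ = dz - 2∑_{i=1}^{2m}(y_i dx_i - x_i dy_i) on R^{4m+4} and f_1 = e_1 + 2∑_{a=1}^m (y_{2a-1} x_{2a} - x_{2a-1} y_{2a}), the 1-form I_1(dz) equals the exact form df_1, where I_1 acts on 1-forms dually to the hypercomplex structure (so that I_1 dx_{2a-1} = dx_{2a}, I_1 dy_{2a-1} = dy_{2a}, I_1 θ = de_1, I_1 de_2 = de_3). -/
/-!
Since `dz = θ + 2 ∑ᵢ (yᵢ dxᵢ - xᵢ dyᵢ)` and `I₁` maps `θ` to `de₁` and rotates each pair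
`(dx_{2a-1}, dx_{2a})`, `(dy_{2a-1}, dy_{2a})`, the form `I₁ dz` is `de₁` plus a combination of the
`dxᵢ, dyᵢ` whose coefficients are exactly the partial derivatives of the quadratic part of `f₁`.
-/

/-- Points of `ℝ^{4m+4}` with coordinates `(x, y, z, e)`, where
`x (a, 0) = x_{2a-1}`, `x (a, 1) = x_{2a}` and similarly for `y`. -/
abbrev Pt (m : ℕ) := (Fin m × Fin 2 → ℝ) × (Fin m × Fin 2 → ℝ) × ℝ × (Fin 3 → ℝ)

/-- The coordinate 1-form `dx_i`. -/
def dxL (m : ℕ) (i : Fin m × Fin 2) : Pt m →ₗ[ℝ] ℝ where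
  toFun p := p.1 i
  map_add' _ _ := rfl
  map_smul' _ _ := rfl

/-- The coordinate 1-form `dy_i`. -/
def dyL (m : ℕ) (i : Fin m × Fin 2) : Pt m →ₗ[ℝ] ℝ where
  toFun p := p.2.1 i
  map_add' _ _ := rfl
  map_smul' _ _ := rfl

/-- The coordinate 1-form `dz`. -/
def dzL (m : ℕ) : Pt m →ₗ[ℝ] ℝ where
  toFun p := p.2.2.1
  map_add' _ _ := rfl
  map_smul' _ _ := rfl

/-- The coordinate 1-form `de_k`. -/
def deL (m : ℕ) (k : Fin 3) : Pt m →ₗ[ℝ] ℝ where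
  toFun p := p.2.2.2 k
  map_add' _ _ := rfl
  map_smul' _ _ := rfl

/-- The invariant 1-form `θ = dz - 2∑ᵢ (yᵢ dxᵢ - xᵢ dyᵢ)` at the point `p`. -/
noncomputable def thetaL (m : ℕ) (p : Pt m) : Pt m →ₗ[ℝ] ℝ :=
  dzL m - (2 : ℝ) • ∑ i : Fin m × Fin 2, (p.2.1 i • dxL m i - p.1 i • dyL m i)

/-- `f₁ = e₁ + 2 ∑ₐ (y_{2a-1} x_{2a} - x_{2a-1} y_{2a})`. -/
def f1 (m : ℕ) (p : Pt m) : ℝ :=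
  p.2.2.2 0 + 2 * ∑ a : Fin m, (p.2.1 (a, 0) * p.1 (a, 1) - p.1 (a, 0) * p.2.1 (a, 1))

theorem LinearMap.hasFDerivAt_mul {E : Type*} [NormedAddCommGroup E] [NormedSpace ℝ E]
    [FiniteDimensional ℝ E] (ℓ ℓ' : E →ₗ[ℝ] ℝ) (p : E) :
    HasFDerivAt (fun q => ℓ q * ℓ' q) (LinearMap.toContinuousLinearMap (ℓ p • ℓ' + ℓ' p • ℓ)) p := by
  refine ((LinearMap.toContinuousLinearMap ℓ).hasFDerivAt.mul
    (LinearMap.toContinuousLinearMap ℓ').hasFDerivAt).congr_fderiv ?_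
  ext v
  simp

theorem toLinearMap_fderiv_f1 (m : ℕ) (p : Pt m) :
    (fderiv ℝ (f1 m) p).toLinearMap = deL m 0 + (2 : ℝ) • ∑ a : Fin m,
      ((p.2.1 (a, 0) • dxL m (a, 1) + p.1 (a, 1) • dyL m (a, 0)) -
        (p.1 (a, 0) • dyL m (a, 1) + p.2.1 (a, 1) • dxL m (a, 0))) := by
  have hf : HasFDerivAt (f1 m) _ p :=
    (LinearMap.toContinuousLinearMap (deL m 0)).hasFDerivAt.add
      ((HasFDerivAt.fun_sum (u := Finset.univ) fun a _ =>
        ((dyL m (a, 0)).hasFDerivAt_mul (dxL m (a, 1)) p).sub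
          ((dxL m (a, 0)).hasFDerivAt_mul (dyL m (a, 1)) p)).const_mul 2)
  rw [hf.fderiv]
  simp only [ContinuousLinearMap.toLinearMap_add, ContinuousLinearMap.toLinearMap_smul,
    ContinuousLinearMap.toLinearMap_sum, ContinuousLinearMap.toLinearMap_sub,
    LinearMap.coe_toContinuousLinearMap]
  rfl

theorem dzL_eq_thetaL_add (m : ℕ) (p : Pt m) :
    dzL m = thetaL m p + (2 : ℝ) • ∑ i : Fin m × Fin 2, (p.2.1 i • dxL m i - p.1 i • dyL m i) := by
  simp [thetaL]

theorem I1_dz_exact_general (m : ℕ) (p : Pt m)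
    (J : (Pt m →ₗ[ℝ] ℝ) →ₗ[ℝ] (Pt m →ₗ[ℝ] ℝ))
    (hx1 : ∀ a : Fin m, J (dxL m (a, 0)) = dxL m (a, 1))
    (hx2 : ∀ a : Fin m, J (dxL m (a, 1)) = -dxL m (a, 0))
    (hy1 : ∀ a : Fin m, J (dyL m (a, 0)) = dyL m (a, 1))
    (hy2 : ∀ a : Fin m, J (dyL m (a, 1)) = -dyL m (a, 0))
    (hθ : J (thetaL m p) = deL m 0) :
    J (dzL m) = (fderiv ℝ (f1 m) p).toLinearMap := by
  rw [toLinearMap_fderiv_f1, dzL_eq_thetaL_add m p, map_add, hθ, map_smul, map_sum]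
  simp only [map_sub, map_smul, Fintype.sum_prod_type, Fin.sum_univ_two, hx1, hx2, hy1, hy2]
  congr 2
  refine Finset.sum_congr rfl fun a _ => ?_
  module

/-- At every point `p` of `ℝ^{4m+4}`, if `J` is the action of `I₁` on 1-forms,
determined on the coframe `{dxᵢ, dyᵢ, θ, deₖ}` by
`I₁ dx_{2a-1} = dx_{2a}`, `I₁ dy_{2a-1} = dy_{2a}`, `I₁ θ = de₁`,
`I₁ de₂ = de₃` (and `I₁² = -Id`), then `I₁(dz) = df₁`. -/
theorem I1_dz_exact (m : ℕ) (p : Pt m)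
    (J : (Pt m →ₗ[ℝ] ℝ) →ₗ[ℝ] (Pt m →ₗ[ℝ] ℝ))
    (hx1 : ∀ a : Fin m, J (dxL m (a, 0)) = dxL m (a, 1))
    (hx2 : ∀ a : Fin m, J (dxL m (a, 1)) = -dxL m (a, 0))
    (hy1 : ∀ a : Fin m, J (dyL m (a, 0)) = dyL m (a, 1))
    (hy2 : ∀ a : Fin m, J (dyL m (a, 1)) = -dyL m (a, 0))
    (hθ : J (thetaL m p) = deL m 0)
    (he1 : J (deL m 0) = -thetaL m p)
    (he2 : J (deL m 1) = deL m 2)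
    (he3 : J (deL m 2) = -deL m 1) :
    J (dzL m) = (fderiv ℝ (f1 m) p).toLinearMap :=
  I1_dz_exact_general m p J hx1 hx2 hy1 hy2 hθ
end

section
/- For the Dolbeault-type estimate on power series: if A(t) = ∑_{n≥1} k (ct)^n / n^2 with k, c > 0, then for all n ≥ 1 the coefficients a_n = k c^n / n^2 satisfy (1/(16k)) ∑_{i=1}^n a_i a_{n+1-i} ≤ a_{n+1}. -/
/-!
With `j = n + 1 - i` one has `1/(ij) = (1/i + 1/j)/(n + 1)`, hence
`1/(i²j²) ≤ 2 (1/i² + 1/j²)/(n + 1)²`. Summing over `i`, using the symmetry `i ↔ j` and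
`∑ 1/i² ≤ 2`, the convolution `∑ 1/(i²j²)` is at most `8/(n + 1)²`, while the powers of `c`
and `k` factor out as `k² c^(n+1)`.
-/

open Finset

lemma sum_Icc_one_reflect {M : Type*} [AddCommMonoid M] (f : ℕ → M) (n : ℕ) :
    ∑ i ∈ Icc 1 n, f (n + 1 - i) = ∑ i ∈ Icc 1 n, f i := by
  simpa only [Nat.add_sub_cancel_left, Nat.add_sub_cancel, Ico_add_one_right_eq_Icc]
    using sum_Ico_reflect f 1 (m := n + 1) (n := n + 1) (by omega)

section Field

variable {α : Type*} [Field α] [LinearOrder α] [IsStrictOrderedRing α]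

lemma inv_mul_sq_le {x y : α} (hx : 0 < x) (hy : 0 < y) :
    (x * y)⁻¹ ^ 2 ≤ 2 * (x⁻¹ ^ 2 + y⁻¹ ^ 2) / (x + y) ^ 2 := by
  have hxy : (x * y)⁻¹ = (x⁻¹ + y⁻¹) / (x + y) := by field_simp; ring
  rw [hxy, div_pow]
  gcongr
  exact add_sq_le

lemma sum_Icc_one_inv_sq_le_two (n : ℕ) : ∑ i ∈ Icc 1 n, (i : α)⁻¹ ^ 2 ≤ 2 := by
  have h := sum_Ioo_inv_sq_le (α := α) 0 (n + 1)
  simp only [Nat.cast_zero, zero_add, div_one, inv_pow] at h ⊢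
  convert h using 2
  ext i
  simp only [mem_Icc, mem_Ioo]
  omega

lemma sum_Icc_one_inv_sq_mul_inv_sq_le (n : ℕ) :
    ∑ i ∈ Icc 1 n, (i : α)⁻¹ ^ 2 * ((n + 1 - i : ℕ) : α)⁻¹ ^ 2 ≤ 8 / ((n : α) + 1) ^ 2 := by
  have hterm (i : ℕ) (hi : i ∈ Icc 1 n) : (i : α)⁻¹ ^ 2 * ((n + 1 - i : ℕ) : α)⁻¹ ^ 2
      ≤ 2 * ((i : α)⁻¹ ^ 2 + ((n + 1 - i : ℕ) : α)⁻¹ ^ 2) / ((n : α) + 1) ^ 2 := by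
    rw [mem_Icc] at hi
    have hsum : (i : α) + ((n + 1 - i : ℕ) : α) = n + 1 := by
      rw [Nat.cast_sub (by omega)]; push_cast; ring
    rw [← mul_pow, ← mul_inv, ← hsum]
    exact inv_mul_sq_le (by exact_mod_cast hi.1) (by norm_cast; omega)
  calc ∑ i ∈ Icc 1 n, (i : α)⁻¹ ^ 2 * ((n + 1 - i : ℕ) : α)⁻¹ ^ 2
      ≤ ∑ i ∈ Icc 1 n, 2 * ((i : α)⁻¹ ^ 2 + ((n + 1 - i : ℕ) : α)⁻¹ ^ 2) / ((n : α) + 1) ^ 2 :=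
        sum_le_sum hterm
    _ = 4 * (∑ i ∈ Icc 1 n, (i : α)⁻¹ ^ 2) / ((n : α) + 1) ^ 2 := by
        rw [← sum_div, ← mul_sum, sum_add_distrib,
          sum_Icc_one_reflect (fun i ↦ (i : α)⁻¹ ^ 2)]
        ring
    _ ≤ 4 * 2 / ((n : α) + 1) ^ 2 := by
        gcongr
        exact sum_Icc_one_inv_sq_le_two n
    _ = 8 / ((n : α) + 1) ^ 2 := by norm_num

end Field

theorem kodaira_coefficient_estimate_general (k c : ℝ) (hk : 0 < k) (hc : 0 < c)
    (n : ℕ) :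
    (1 / (16 * k)) * ∑ i ∈ Finset.Icc 1 n,
        (k * c ^ i / (i : ℝ) ^ 2) * (k * c ^ (n + 1 - i) / ((n + 1 - i : ℕ) : ℝ) ^ 2)
      ≤ k * c ^ (n + 1) / ((n : ℝ) + 1) ^ 2 := by
  have hterm (i : ℕ) (hi : i ∈ Icc 1 n) :
      (k * c ^ i / (i : ℝ) ^ 2) * (k * c ^ (n + 1 - i) / ((n + 1 - i : ℕ) : ℝ) ^ 2)
        = k ^ 2 * c ^ (n + 1) * ((i : ℝ)⁻¹ ^ 2 * ((n + 1 - i : ℕ) : ℝ)⁻¹ ^ 2) := by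
    rw [← pow_mul_pow_sub c (by rw [mem_Icc] at hi; omega : i ≤ n + 1)]
    ring
  calc (1 / (16 * k)) * ∑ i ∈ Icc 1 n,
        (k * c ^ i / (i : ℝ) ^ 2) * (k * c ^ (n + 1 - i) / ((n + 1 - i : ℕ) : ℝ) ^ 2)
      = k * c ^ (n + 1) / 16 *
          ∑ i ∈ Icc 1 n, (i : ℝ)⁻¹ ^ 2 * ((n + 1 - i : ℕ) : ℝ)⁻¹ ^ 2 := by
        rw [sum_congr rfl hterm, ← mul_sum]
        field_simp
    _ ≤ k * c ^ (n + 1) / 16 * (8 / ((n : ℝ) + 1) ^ 2) := by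
        gcongr
        exact sum_Icc_one_inv_sq_mul_inv_sq_le n
    _ = k * c ^ (n + 1) / ((n : ℝ) + 1) ^ 2 / 2 := by ring
    _ ≤ k * c ^ (n + 1) / ((n : ℝ) + 1) ^ 2 := half_le_self (by positivity)

/-- For `a_n = k cⁿ / n²` with `k, c > 0`, the coefficients satisfy
`(1/(16k)) ∑_{i=1}^n a_i a_{n+1-i} ≤ a_{n+1}` for all `n ≥ 1`. -/
theorem kodaira_coefficient_estimate (k c : ℝ) (hk : 0 < k) (hc : 0 < c)
    (n : ℕ) (hn : 1 ≤ n) :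
    (1 / (16 * k)) * ∑ i ∈ Finset.Icc 1 n,
        (k * c ^ i / (i : ℝ) ^ 2) * (k * c ^ (n + 1 - i) / ((n + 1 - i : ℕ) : ℝ) ^ 2)
      ≤ k * c ^ (n + 1) / ((n : ℝ) + 1) ^ 2 :=
  kodaira_coefficient_estimate_general k c hk hc n
end
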